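/- Let J = diag(J1,J2,J3) with J1,J2,J3 > 0, let E(w) := J^{-1}(Jw × w) for w ∈ ℝ³, and let d := max(|J3−J2|/J1, |J1−J3|/J2, |J2−J1|/J3). Let k > 0 and ω_max > 0. For all ω, ω̂ ∈ ℝ³ with |ω| ≤ ω_max, all ã ∈ ℝ³, and Z := (ã, (ω−ω̂)/k) ∈ ℝ⁶, one has |E(ω) − E(ω̂)|/k ≤ d(√2 · ω_max · |Z| + k·|Z|²), where |·| denotes the Euclidean norm. -/
import Mathlib


open Matrix MeasureTheory

noncomputable section

/-- Cross product on ℝ³. -/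
def cross3 (x y : Fin 3 → ℝ) : Fin 3 → ℝ :=
  ![x 1 * y 2 - x 2 * y 1, x 2 * y 0 - x 0 * y 2, x 0 * y 1 - x 1 * y 0]

/-- Euclidean norm on ℝ³. -/
def enorm3 (x : Fin 3 → ℝ) : ℝ := Real.sqrt (∑ i, (x i) ^ 2)

lemma enorm3_eq (x : Fin 3 → ℝ) : enorm3 x = Real.sqrt (x 0^2 + x 1^2 + x 2^2) := by
  rw [enorm3, Fin.sum_univ_three]

lemma cauchy3 (a b c u v w : ℝ) :
    a*u + b*v + c*w ≤ Real.sqrt (a^2+b^2+c^2) * Real.sqrt (u^2+v^2+w^2) := by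
  have h1 : (a*u+b*v+c*w)^2 ≤ (a^2+b^2+c^2)*(u^2+v^2+w^2) := by
    nlinarith [sq_nonneg (a*v-b*u), sq_nonneg (a*w-c*u), sq_nonneg (b*w-c*v)]
  calc a*u+b*v+c*w ≤ |a*u+b*v+c*w| := le_abs_self _
    _ = Real.sqrt ((a*u+b*v+c*w)^2) := (Real.sqrt_sq_eq_abs _).symm
    _ ≤ Real.sqrt ((a^2+b^2+c^2)*(u^2+v^2+w^2)) := Real.sqrt_le_sqrt h1
    _ = _ := Real.sqrt_mul (by positivity) _

lemma three_ineq (w1 w2 w3 e1 e2 e3 : ℝ) :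
    (w2*e3+w3*e2-e2*e3)^2 + (w3*e1+w1*e3-e3*e1)^2 + (w1*e2+w2*e1-e1*e2)^2
      ≤ (Real.sqrt 2 * Real.sqrt (w1^2+w2^2+w3^2) * Real.sqrt (e1^2+e2^2+e3^2)
          + (e1^2+e2^2+e3^2))^2 := by
  set W := Real.sqrt (w1^2+w2^2+w3^2) with hW
  set En := Real.sqrt (e1^2+e2^2+e3^2) with hEn
  have hW0 : 0 ≤ W := Real.sqrt_nonneg _
  have hEn0 : 0 ≤ En := Real.sqrt_nonneg _
  have hW2 : W^2 = w1^2+w2^2+w3^2 := Real.sq_sqrt (by positivity)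
  have hEn2 : En^2 = e1^2+e2^2+e3^2 := Real.sq_sqrt (by positivity)
  have hs2 : Real.sqrt 2 ^ 2 = 2 := Real.sq_sqrt (by norm_num)
  have hs20 : (0:ℝ) ≤ Real.sqrt 2 := Real.sqrt_nonneg _
  -- bound the symmetric part
  have hU : (w2*e3+w3*e2)^2 + (w3*e1+w1*e3)^2 + (w1*e2+w2*e1)^2 ≤ 2*W^2*En^2 := by
    rw [hW2, hEn2]
    nlinarith [sq_nonneg (w1*e2-w2*e1), sq_nonneg (w1*e3-w3*e1), sq_nonneg (w2*e3-w3*e2),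
      sq_nonneg (w1*e1), sq_nonneg (w2*e2), sq_nonneg (w3*e3)]
  have hV : (e2*e3)^2 + (e3*e1)^2 + (e1*e2)^2 ≤ (En^2)^2 := by
    rw [hEn2]; nlinarith [sq_nonneg (e1^2), sq_nonneg (e2^2), sq_nonneg (e3^2)]
  -- cross term via Cauchy-Schwarz
  have hC : -((w2*e3+w3*e2)*(e2*e3) + (w3*e1+w1*e3)*(e3*e1) + (w1*e2+w2*e1)*(e1*e2))
      ≤ (Real.sqrt 2 * W * En) * En^2 := by
    have h := cauchy3 (w2*e3+w3*e2) (w3*e1+w1*e3) (w1*e2+w2*e1) (-(e2*e3)) (-(e3*e1)) (-(e1*e2))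
    have h2 : Real.sqrt ((w2*e3+w3*e2)^2 + (w3*e1+w1*e3)^2 + (w1*e2+w2*e1)^2)
        ≤ Real.sqrt 2 * W * En := by
      have : Real.sqrt ((w2*e3+w3*e2)^2 + (w3*e1+w1*e3)^2 + (w1*e2+w2*e1)^2)
          ≤ Real.sqrt ((Real.sqrt 2 * W * En)^2) := by
        apply Real.sqrt_le_sqrt
        calc _ ≤ 2*W^2*En^2 := hU
          _ = (Real.sqrt 2 * W * En)^2 := by rw [mul_pow, mul_pow, hs2]
      rwa [Real.sqrt_sq (by positivity)] at this
    have h3 : Real.sqrt ((-(e2*e3))^2 + (-(e3*e1))^2 + (-(e1*e2))^2) ≤ En^2 := by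
      have : Real.sqrt ((-(e2*e3))^2 + (-(e3*e1))^2 + (-(e1*e2))^2)
          ≤ Real.sqrt ((En^2)^2) := by
        apply Real.sqrt_le_sqrt
        simpa using hV
      rwa [Real.sqrt_sq (by positivity)] at this
    calc -((w2*e3+w3*e2)*(e2*e3) + (w3*e1+w1*e3)*(e3*e1) + (w1*e2+w2*e1)*(e1*e2))
        = (w2*e3+w3*e2)*(-(e2*e3)) + (w3*e1+w1*e3)*(-(e3*e1)) + (w1*e2+w2*e1)*(-(e1*e2)) := by ring
      _ ≤ _ := h
      _ ≤ (Real.sqrt 2 * W * En) * En^2 := by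
          apply mul_le_mul h2 h3 (Real.sqrt_nonneg _) (by positivity)
  have expand : (w2*e3+w3*e2-e2*e3)^2 + (w3*e1+w1*e3-e3*e1)^2 + (w1*e2+w2*e1-e1*e2)^2
      = ((w2*e3+w3*e2)^2 + (w3*e1+w1*e3)^2 + (w1*e2+w2*e1)^2)
        + ((e2*e3)^2 + (e3*e1)^2 + (e1*e2)^2)
        + 2 * (-((w2*e3+w3*e2)*(e2*e3) + (w3*e1+w1*e3)*(e3*e1) + (w1*e2+w2*e1)*(e1*e2))) := by
    ring
  have expand2 : (Real.sqrt 2 * W * En + (e1^2+e2^2+e3^2))^2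
      = 2*W^2*En^2 + (En^2)^2 + 2*((Real.sqrt 2 * W * En) * En^2) := by
    have h : (Real.sqrt 2 * W * En + (e1^2+e2^2+e3^2))^2
        = (Real.sqrt 2)^2 * (W^2*En^2) + (e1^2+e2^2+e3^2)^2
          + 2*((Real.sqrt 2 * W * En) * (e1^2+e2^2+e3^2)) := by ring
    rw [h, hs2, ← hEn2]; ring
  rw [expand, expand2]
  linarith

set_option maxHeartbeats 1000000 in
/-- bound on the disturbance `|E(ω) − E(ω̂)|/k ≤ d(√2·ω_max·|Z| + k·|Z|²)`. -/
theorem disturbance_bound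
    (J1 J2 J3 : ℝ) (hJ1 : 0 < J1) (hJ2 : 0 < J2) (hJ3 : 0 < J3)
    (J : Matrix (Fin 3) (Fin 3) ℝ) (hJ : J = Matrix.diagonal ![J1, J2, J3])
    (E : (Fin 3 → ℝ) → Fin 3 → ℝ)
    (hE : ∀ w, E w = J⁻¹.mulVec (cross3 (J.mulVec w) w))
    (d : ℝ) (hd : d = max (max (|J3 - J2| / J1) (|J1 - J3| / J2)) (|J2 - J1| / J3))
    (k ωmax : ℝ) (hk : 0 < k) (hωmax : 0 < ωmax)
    (ω ωhat : Fin 3 → ℝ) (hbound : enorm3 ω ≤ ωmax)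
    (atil : Fin 3 → ℝ)
    (nZ : ℝ) (hnZ : nZ = Real.sqrt (enorm3 atil ^ 2 + enorm3 (k⁻¹ • (ω - ωhat)) ^ 2)) :
    enorm3 (E ω - E ωhat) / k ≤ d * (Real.sqrt 2 * ωmax * nZ + k * nZ ^ 2) := by
  have hJinv : J⁻¹ = Matrix.diagonal ![J1⁻¹, J2⁻¹, J3⁻¹] := by
    rw [hJ]
    apply Matrix.inv_eq_left_inv
    rw [Matrix.diagonal_mul_diagonal]
    ext i j
    fin_cases i <;> fin_cases j <;> simp [Matrix.diagonal, hJ1.ne', hJ2.ne', hJ3.ne']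
  -- explicit components of E w
  have hEc : ∀ w : Fin 3 → ℝ, E w = ![(J2-J3)/J1 * (w 1 * w 2), (J3-J1)/J2 * (w 2 * w 0),
      (J1-J2)/J3 * (w 0 * w 1)] := by
    intro w
    rw [hE, hJinv, hJ]
    funext i
    fin_cases i <;>
      simp [Matrix.mulVec_diagonal, cross3, div_eq_inv_mul] <;> ring
  set c1 : ℝ := (J2-J3)/J1
  set c2 : ℝ := (J3-J1)/J2
  set c3 : ℝ := (J1-J2)/J3
  have hd0 : 0 ≤ d := by
    rw [hd]
    exact le_trans (by positivity) (le_max_of_le_left (le_max_left _ _))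
  have hc1 : c1^2 ≤ d^2 := by
    have h1 : |c1| ≤ d := by
      rw [hd, abs_div, abs_of_pos hJ1, abs_sub_comm]
      exact le_max_of_le_left (le_max_left _ _)
    calc c1^2 = |c1|^2 := (sq_abs _).symm
      _ ≤ d^2 := by nlinarith [abs_nonneg c1]
  have hc2 : c2^2 ≤ d^2 := by
    have h1 : |c2| ≤ d := by
      rw [hd, abs_div, abs_of_pos hJ2, abs_sub_comm]
      exact le_max_of_le_left (le_max_right _ _)
    calc c2^2 = |c2|^2 := (sq_abs _).symm
      _ ≤ d^2 := by nlinarith [abs_nonneg c2]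
  have hc3 : c3^2 ≤ d^2 := by
    have h1 : |c3| ≤ d := by
      rw [hd, abs_div, abs_of_pos hJ3, abs_sub_comm]
      exact le_max_right _ _
    calc c3^2 = |c3|^2 := (sq_abs _).symm
      _ ≤ d^2 := by nlinarith [abs_nonneg c3]
  -- abbreviations
  set w1 := ω 0; set w2 := ω 1; set w3 := ω 2
  set e1 := ω 0 - ωhat 0; set e2 := ω 1 - ωhat 1; set e3 := ω 2 - ωhat 2
  set W := enorm3 ω with hWdef
  set En := Real.sqrt (e1^2+e2^2+e3^2) with hEndef
  have hW0 : 0 ≤ W := Real.sqrt_nonneg _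
  have hEn0 : 0 ≤ En := Real.sqrt_nonneg _
  have hEn2 : En^2 = e1^2+e2^2+e3^2 := Real.sq_sqrt (by positivity)
  have hW2 : W^2 = w1^2+w2^2+w3^2 := by
    rw [hWdef, enorm3_eq]; exact Real.sq_sqrt (by positivity)
  -- norm of the difference
  have hDcomp : ∀ i, (E ω - E ωhat) i = E ω i - E ωhat i := fun i => rfl
  have hA : E ω 0 - E ωhat 0 = c1 * (w2*e3+w3*e2-e2*e3) := by
    rw [hEc, hEc]; show c1 * (ω 1 * ω 2) - c1 * (ωhat 1 * ωhat 2) = _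
    simp only [e2, e3, w2, w3]; ring
  have hB : E ω 1 - E ωhat 1 = c2 * (w3*e1+w1*e3-e3*e1) := by
    rw [hEc, hEc]; show c2 * (ω 2 * ω 0) - c2 * (ωhat 2 * ωhat 0) = _
    simp only [e1, e3, w1, w3]; ring
  have hC : E ω 2 - E ωhat 2 = c3 * (w1*e2+w2*e1-e1*e2) := by
    rw [hEc, hEc]; show c3 * (ω 0 * ω 1) - c3 * (ωhat 0 * ωhat 1) = _
    simp only [e1, e2, w1, w2]; ring
  have key : enorm3 (E ω - E ωhat) ≤ d * (Real.sqrt 2 * W * En + En^2) := by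
    rw [enorm3_eq, hDcomp, hDcomp, hDcomp, hA, hB, hC]
    have step1 : Real.sqrt ((c1 * (w2*e3+w3*e2-e2*e3))^2 + (c2 * (w3*e1+w1*e3-e3*e1))^2
        + (c3 * (w1*e2+w2*e1-e1*e2))^2)
        ≤ Real.sqrt (d^2 * ((w2*e3+w3*e2-e2*e3)^2 + (w3*e1+w1*e3-e3*e1)^2
            + (w1*e2+w2*e1-e1*e2)^2)) := by
      apply Real.sqrt_le_sqrt
      have main : ∀ A B C : ℝ, (c1*A)^2 + (c2*B)^2 + (c3*C)^2 ≤ d^2*(A^2+B^2+C^2) := by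
        intro A B C
        nlinarith [sq_nonneg A, sq_nonneg B, sq_nonneg C, hc1, hc2, hc3]
      exact main _ _ _
    have step2 : Real.sqrt (d^2 * ((w2*e3+w3*e2-e2*e3)^2 + (w3*e1+w1*e3-e3*e1)^2
        + (w1*e2+w2*e1-e1*e2)^2)) = d * Real.sqrt ((w2*e3+w3*e2-e2*e3)^2
          + (w3*e1+w1*e3-e3*e1)^2 + (w1*e2+w2*e1-e1*e2)^2) := by
      rw [Real.sqrt_mul (sq_nonneg d), Real.sqrt_sq hd0]
    have step3 : Real.sqrt ((w2*e3+w3*e2-e2*e3)^2 + (w3*e1+w1*e3-e3*e1)^2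
        + (w1*e2+w2*e1-e1*e2)^2) ≤ Real.sqrt 2 * W * En + En^2 := by
      have h := three_ineq w1 w2 w3 e1 e2 e3
      have h2 : Real.sqrt ((w2*e3+w3*e2-e2*e3)^2 + (w3*e1+w1*e3-e3*e1)^2
          + (w1*e2+w2*e1-e1*e2)^2)
          ≤ Real.sqrt ((Real.sqrt 2 * Real.sqrt (w1^2+w2^2+w3^2)
              * Real.sqrt (e1^2+e2^2+e3^2) + (e1^2+e2^2+e3^2))^2) := Real.sqrt_le_sqrt h
      rw [Real.sqrt_sq (by positivity)] at h2
      have hWeq : Real.sqrt (w1^2+w2^2+w3^2) = W := by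
        rw [hWdef, enorm3_eq]
      rw [hWeq, ← hEndef, ← hEn2] at h2
      exact h2
    calc _ ≤ _ := step1
      _ = _ := step2
      _ ≤ d * (Real.sqrt 2 * W * En + En^2) := by
          apply mul_le_mul_of_nonneg_left step3 hd0
  -- relate En with nZ
  have hnZ0 : 0 ≤ nZ := hnZ ▸ Real.sqrt_nonneg _
  have hEnk : En ≤ k * nZ := by
    have hnorm : enorm3 (k⁻¹ • (ω - ωhat)) = k⁻¹ * En := by
      rw [enorm3_eq]
      have h0 : (k⁻¹ • (ω - ωhat)) 0 = k⁻¹ * e1 := rfl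
      have h1 : (k⁻¹ • (ω - ωhat)) 1 = k⁻¹ * e2 := rfl
      have h2 : (k⁻¹ • (ω - ωhat)) 2 = k⁻¹ * e3 := rfl
      rw [h0, h1, h2]
      have : (k⁻¹*e1)^2 + (k⁻¹*e2)^2 + (k⁻¹*e3)^2 = (k⁻¹)^2 * (e1^2+e2^2+e3^2) := by ring
      rw [this, Real.sqrt_mul (sq_nonneg _), Real.sqrt_sq (by positivity), hEndef]
    have h1 : k⁻¹ * En ≤ nZ := by
      rw [hnZ]
      calc k⁻¹ * En = Real.sqrt ((k⁻¹ * En)^2) := (Real.sqrt_sq (by positivity)).symm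
        _ ≤ Real.sqrt (enorm3 atil ^ 2 + enorm3 (k⁻¹ • (ω - ωhat)) ^ 2) := by
            apply Real.sqrt_le_sqrt
            rw [hnorm]
            nlinarith [sq_nonneg (enorm3 atil)]
    calc En = k * (k⁻¹ * En) := by field_simp
      _ ≤ k * nZ := by nlinarith [h1]
  -- finish
  have hWb : W ≤ ωmax := hbound
  have hWE : W * En ≤ ωmax * (k * nZ) :=
    mul_le_mul hWb hEnk hEn0 (le_of_lt hωmax)
  have hE2 : En^2 ≤ (k*nZ)^2 := by nlinarith
  have final : d * (Real.sqrt 2 * W * En + En^2) ≤ d * (Real.sqrt 2 * ωmax * nZ + k * nZ^2) * k := by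
    have step : Real.sqrt 2 * W * En + En^2 ≤ (Real.sqrt 2 * ωmax * nZ + k * nZ^2) * k := by
      nlinarith [hWE, hE2, Real.sqrt_nonneg 2, mul_le_mul_of_nonneg_left hWE (Real.sqrt_nonneg 2)]
    calc d * (Real.sqrt 2 * W * En + En^2) ≤ d * ((Real.sqrt 2 * ωmax * nZ + k * nZ^2) * k) :=
          mul_le_mul_of_nonneg_left step hd0
      _ = d * (Real.sqrt 2 * ωmax * nZ + k * nZ^2) * k := by ring
  rw [div_le_iff₀ hk]
  calc enorm3 (E ω - E ωhat) ≤ d * (Real.sqrt 2 * W * En + En^2) := key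
    _ ≤ _ := final

end
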